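/- Fix s > 0 and define J(s,ℓ) = Φ(−ℓ/(2√s)) + exp(ℓ²(s−1)/2) Φ(ℓ(1/(2√s) − √s)) for ℓ > 0. Then ℓ ↦ J(s,ℓ) is strictly decreasing on (0,∞). -/

import Mathlib

/-!
Write `a = 1 / (2√s)` and `b = a - √s`, so that `b² - a² = s - 1` and
`J s ℓ = Φ(-aℓ) + exp(ℓ²(b² - a²)/2) Φ(bℓ)`. Since `exp(ℓ²(b² - a²)/2) φ(bℓ) = φ(aℓ)`, the
derivative in `ℓ` is `(b - a) φ(aℓ) + ℓ(b² - a²) exp(ℓ²(b² - a²)/2) Φ(bℓ)`. Its first term is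
negative because `b < a`. The second is nonpositive when `b² ≤ a²`; otherwise `b < -a < 0`, and
Mills' ratio `Φ(x) ≤ φ(x) / (-x)` for `x < 0` bounds the derivative by `φ(aℓ) a (a - b) / b < 0`.
-/

open Real Set

noncomputable def Phi (x : ℝ) : ℝ :=
  (Real.sqrt (2 * Real.pi))⁻¹ * ∫ y in Set.Iic x, Real.exp (-y ^ 2 / 2)

/-- `J(s,ℓ) = Φ(−ℓ/(2√s)) + exp(ℓ²(s−1)/2) Φ(ℓ(1/(2√s) − √s))`. -/
noncomputable def J (s ℓ : ℝ) : ℝ :=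
  Phi (-ℓ / (2 * Real.sqrt s)) +
    Real.exp (ℓ ^ 2 * (s - 1) / 2) * Phi (ℓ * (1 / (2 * Real.sqrt s) - Real.sqrt s))

open MeasureTheory Filter Topology

lemma hasDerivAt_integral_Iic {E : Type*} [NormedAddCommGroup E] [NormedSpace ℝ E]
    [CompleteSpace E] {f : ℝ → E} (hf : Integrable f) (hc : Continuous f) (x : ℝ) :
    HasDerivAt (fun t => ∫ y in Iic t, f y) (f x) x := by
  have hsplit :
      (fun t => ∫ y in Iic t, f y) = fun t => (∫ y in Iic 0, f y) + ∫ y in (0)..t, f y :=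
    funext fun t => by
      rw [← intervalIntegral.integral_Iic_sub_Iic hf.integrableOn hf.integrableOn, add_sub_cancel]
  rw [hsplit]
  exact (intervalIntegral.integral_hasDerivAt_right hf.intervalIntegrable
    (hc.stronglyMeasurableAtFilter _ _) hc.continuousAt).const_add _

lemma exp_neg_sq_div_two_eq (y : ℝ) : exp (-y ^ 2 / 2) = exp (-(1 / 2) * y ^ 2) := by
  ring_nf

lemma integrable_exp_neg_sq_div_two : Integrable fun y : ℝ => exp (-y ^ 2 / 2) := by
  simpa only [exp_neg_sq_div_two_eq] using
    integrable_exp_neg_mul_sq (by norm_num : (0 : ℝ) < 1 / 2)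

lemma integrable_mul_exp_neg_sq_div_two : Integrable fun y : ℝ => y * exp (-y ^ 2 / 2) := by
  simpa only [exp_neg_sq_div_two_eq] using
    integrable_mul_exp_neg_mul_sq (by norm_num : (0 : ℝ) < 1 / 2)

lemma tendsto_exp_neg_sq_div_two_atBot :
    Tendsto (fun t : ℝ => exp (-t ^ 2 / 2)) atBot (𝓝 0) := by
  have h := (tendsto_neg_atTop_atBot.comp ((tendsto_pow_atTop two_ne_zero).comp
    tendsto_neg_atBot_atTop)).atBot_div_const (two_pos : (0 : ℝ) < 2)
  exact tendsto_exp_atBot.comp (by simpa [Function.comp_def] using h)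

lemma integral_Iic_mul_exp_neg_sq_div_two (x : ℝ) :
    ∫ y in Iic x, y * exp (-y ^ 2 / 2) = -exp (-x ^ 2 / 2) := by
  have hderiv (y : ℝ) : HasDerivAt (fun t => -exp (-t ^ 2 / 2)) (y * exp (-y ^ 2 / 2)) y := by
    refine (((hasDerivAt_pow 2 y).neg.div_const 2).exp).neg.congr_deriv ?_
    simp only [Pi.neg_apply, Nat.cast_ofNat]
    ring
  simpa using integral_Iic_of_hasDerivAt_of_tendsto' (fun y _ => hderiv y)
    integrable_mul_exp_neg_sq_div_two.integrableOn tendsto_exp_neg_sq_div_two_atBot.neg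

/-- Mills' ratio: on `Iic x` the weight `y / x` is at least `1`, and `y * exp (-y ^ 2 / 2)` has
the explicit primitive `-exp (-y ^ 2 / 2)`. -/
lemma integral_Iic_exp_neg_sq_div_two_le {x : ℝ} (hx : x < 0) :
    ∫ y in Iic x, exp (-y ^ 2 / 2) ≤ exp (-x ^ 2 / 2) / -x := by
  have hpointwise : ∀ y ∈ Iic x, exp (-y ^ 2 / 2) ≤ x⁻¹ * (y * exp (-y ^ 2 / 2)) := by
    intro y hy
    have h1 : 1 ≤ x⁻¹ * y := by
      rw [inv_mul_eq_div, one_le_div_of_neg hx]; exact hy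
    nlinarith [exp_pos (-y ^ 2 / 2)]
  calc ∫ y in Iic x, exp (-y ^ 2 / 2)
      ≤ ∫ y in Iic x, x⁻¹ * (y * exp (-y ^ 2 / 2)) :=
        setIntegral_mono_on integrable_exp_neg_sq_div_two.integrableOn
          (integrable_mul_exp_neg_sq_div_two.integrableOn.const_mul _) measurableSet_Iic hpointwise
    _ = exp (-x ^ 2 / 2) / -x := by
        rw [integral_const_mul, integral_Iic_mul_exp_neg_sq_div_two]; field_simp

noncomputable def phi (x : ℝ) : ℝ :=
  (√(2 * π))⁻¹ * exp (-x ^ 2 / 2)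

lemma phi_pos (x : ℝ) : 0 < phi x := by
  unfold phi; have := pi_pos; positivity

lemma phi_neg (x : ℝ) : phi (-x) = phi x := by
  simp [phi]

lemma hasDerivAt_Phi (x : ℝ) : HasDerivAt Phi (phi x) x :=
  (hasDerivAt_integral_Iic integrable_exp_neg_sq_div_two (by fun_prop) x).const_mul _

lemma Phi_nonneg (x : ℝ) : 0 ≤ Phi x :=
  mul_nonneg (inv_nonneg.2 (sqrt_nonneg _))
    (setIntegral_nonneg measurableSet_Iic fun _ _ => (exp_pos _).le)

lemma Phi_le_phi_div_neg {x : ℝ} (hx : x < 0) : Phi x ≤ phi x / -x := by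
  rw [Phi, phi, mul_div_assoc]
  exact mul_le_mul_of_nonneg_left (integral_Iic_exp_neg_sq_div_two_le hx)
    (inv_nonneg.2 (sqrt_nonneg _))

lemma exp_mul_phi_mul (a b ℓ : ℝ) :
    exp (ℓ ^ 2 * (b ^ 2 - a ^ 2) / 2) * phi (b * ℓ) = phi (a * ℓ) := by
  rw [phi, phi, mul_left_comm, ← exp_add]
  congr 2
  ring

noncomputable def Jab (a b ℓ : ℝ) : ℝ :=
  Phi (-(a * ℓ)) + exp (ℓ ^ 2 * (b ^ 2 - a ^ 2) / 2) * Phi (b * ℓ)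

lemma hasDerivAt_Jab (a b ℓ : ℝ) :
    HasDerivAt (Jab a b) ((b - a) * phi (a * ℓ) +
      ℓ * (b ^ 2 - a ^ 2) * exp (ℓ ^ 2 * (b ^ 2 - a ^ 2) / 2) * Phi (b * ℓ)) ℓ := by
  have hPhi_neg := (hasDerivAt_Phi (-(a * ℓ))).comp ℓ ((hasDerivAt_id ℓ).const_mul a).neg
  have hexp := (((hasDerivAt_pow 2 ℓ).mul_const (b ^ 2 - a ^ 2)).div_const 2).exp
  have hPhi := (hasDerivAt_Phi (b * ℓ)).comp ℓ ((hasDerivAt_id ℓ).const_mul b)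
  refine (hPhi_neg.add (hexp.mul hPhi)).congr_deriv ?_
  rw [phi_neg, ← exp_mul_phi_mul a b ℓ, Function.comp_apply]
  ring

lemma Jab_deriv_neg {a b ℓ : ℝ} (ha : 0 < a) (hba : b < a) (hℓ : 0 < ℓ) :
    (b - a) * phi (a * ℓ) +
      ℓ * (b ^ 2 - a ^ 2) * exp (ℓ ^ 2 * (b ^ 2 - a ^ 2) / 2) * Phi (b * ℓ) < 0 := by
  have hfirst : (b - a) * phi (a * ℓ) < 0 := mul_neg_of_neg_of_pos (by linarith) (phi_pos _)
  rcases le_or_gt (b ^ 2) (a ^ 2) with hsq | hsq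
  · have hsecond : ℓ * (b ^ 2 - a ^ 2) * exp (ℓ ^ 2 * (b ^ 2 - a ^ 2) / 2) * Phi (b * ℓ) ≤ 0 :=
      mul_nonpos_of_nonpos_of_nonneg (mul_nonpos_of_nonpos_of_nonneg
        (mul_nonpos_of_nonneg_of_nonpos hℓ.le (by linarith)) (exp_pos _).le) (Phi_nonneg _)
    linarith
  · have hb : b < 0 := by nlinarith
    have hcoef : 0 ≤ ℓ * (b ^ 2 - a ^ 2) * exp (ℓ ^ 2 * (b ^ 2 - a ^ 2) / 2) := by
      have := exp_pos (ℓ ^ 2 * (b ^ 2 - a ^ 2) / 2)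
      have : 0 < b ^ 2 - a ^ 2 := by linarith
      positivity
    calc (b - a) * phi (a * ℓ) +
          ℓ * (b ^ 2 - a ^ 2) * exp (ℓ ^ 2 * (b ^ 2 - a ^ 2) / 2) * Phi (b * ℓ)
        ≤ (b - a) * phi (a * ℓ) +
          ℓ * (b ^ 2 - a ^ 2) * exp (ℓ ^ 2 * (b ^ 2 - a ^ 2) / 2) * (phi (b * ℓ) / -(b * ℓ)) := by
          gcongr
          exact Phi_le_phi_div_neg (mul_neg_of_neg_of_pos hb hℓ)
      _ = phi (a * ℓ) * (a * (a - b) / b) := by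
          rw [← exp_mul_phi_mul a b ℓ]
          field_simp [hb.ne]
          ring
      _ < 0 := mul_neg_of_pos_of_neg (phi_pos _) (div_neg_of_pos_of_neg (by nlinarith) hb)

lemma strictAntiOn_Jab {a b : ℝ} (ha : 0 < a) (hba : b < a) : StrictAntiOn (Jab a b) (Ioi 0) := by
  refine strictAntiOn_of_hasDerivWithinAt_neg (convex_Ioi 0)
    (fun ℓ _ => (hasDerivAt_Jab a b ℓ).continuousAt.continuousWithinAt)
    (fun ℓ _ => (hasDerivAt_Jab a b ℓ).hasDerivWithinAt) ?_
  rw [interior_Ioi]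
  exact fun ℓ hℓ => Jab_deriv_neg ha hba hℓ

lemma J_eq_Jab {s : ℝ} (hs : 0 < s) :
    (fun ℓ => J s ℓ) = Jab (1 / (2 * √s)) (1 / (2 * √s) - √s) := by
  have hsq : (1 / (2 * √s) - √s) ^ 2 - (1 / (2 * √s)) ^ 2 = s - 1 := by
    field_simp
    rw [sq_sqrt hs.le]
    ring
  ext ℓ
  rw [J, Jab, hsq]
  ring_nf

/-- For fixed `s > 0`, `ℓ ↦ J(s,ℓ)` is strictly decreasing on `(0,∞)`. -/
theorem J_strictAntiOn (s : ℝ) (hs : 0 < s) : StrictAntiOn (fun ℓ => J s ℓ) (Set.Ioi 0) := by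
  have hsqrt : 0 < √s := sqrt_pos.2 hs
  rw [J_eq_Jab hs]
  exact strictAntiOn_Jab (by positivity) (by linarith)
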